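/- Consider a generalised reachability game on a game arena with start vertex s whose target sets are a set F_0 ⊆ V together with the singletons {t_1}, ..., {t_k}, and write A_i = Attr({t_i}) for 1 ≤ i ≤ k. Then Eve wins the game if and only if there is a permutation π of {1, ..., k} such that, setting A_{π(0)} := V and t_{π(k+1)} := s: (1) A_{π(k)} ⊆ A_{π(k-1)} ⊆ ... ⊆ A_{π(1)}; (2) s ∈ A_{π(k)}; and (3) there exists i ∈ {0, 1, ..., k} with t_{π(i+1)} ∈ Attr(A_{π(i)} ∩ F_0). -/

import Mathlib

/-- A game arena: a finite directed graph in which every vertex has at least one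
outgoing edge, together with the set of vertices controlled by Eve (the remaining
vertices are controlled by Adam). -/
structure Arena (V : Type*) [Fintype V] where
  E : V → V → Prop
  VEve : Set V
  succ_nonempty : ∀ v, ∃ w, E v w

variable {V : Type*} [Fintype V]

/-- An infinite play starting from `s`. -/
def IsPlay (A : Arena V) (s : V) (p : ℕ → V) : Prop :=
  p 0 = s ∧ ∀ i, A.E (p i) (p (i + 1))

/-- The play `p` visits the set `S`. -/
def Visits (p : ℕ → V) (S : Set V) : Prop := ∃ i, p i ∈ S

/-- A strategy maps a history (the sequence of previously visited vertices)
together with the current vertex to a next vertex. -/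
def Strategy (V : Type*) : Type _ := List V → V → V

/-- A strategy is valid if it always moves along an edge. -/
def ValidStrategy (A : Arena V) (σ : Strategy V) : Prop :=
  ∀ h v, A.E v (σ h v)

/-- The history `v_0 ... v_{i-1}` of the play `p` before time `i`. -/
def hist (p : ℕ → V) (i : ℕ) : List V := List.ofFn fun j : Fin i => p j

/-- The play `p` is consistent with the Eve-strategy `σ`. -/
def ConsistentEve (A : Arena V) (σ : Strategy V) (p : ℕ → V) : Prop :=
  ∀ i, p i ∈ A.VEve → p (i + 1) = σ (hist p i) (p i)

/-- The play `p` is consistent with the Adam-strategy `σ`. -/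
def ConsistentAdam (A : Arena V) (σ : Strategy V) (p : ℕ → V) : Prop :=
  ∀ i, p i ∉ A.VEve → p (i + 1) = σ (hist p i) (p i)

/-- The `i`-step Eve-attractor of the set `S`. -/
def AttrN (A : Arena V) (S : Set V) : ℕ → Set V
  | 0 => S
  | i + 1 => AttrN A S i ∪ {u | u ∈ A.VEve ∧ ∃ v, A.E u v ∧ v ∈ AttrN A S i}
      ∪ {u | u ∉ A.VEve ∧ ∀ v, A.E u v → v ∈ AttrN A S i}

/-- The Eve-attractor of the set `S`. -/
def Attr (A : Arena V) (S : Set V) : Set V := ⋃ i, AttrN A S i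

/-- Eve wins the generalised reachability game with target sets `F i`
from `s` if she has a strategy such that every consistent play from `s`
visits every target set. -/
def EveWins {ι : Type*} (A : Arena V) (s : V) (F : ι → Set V) : Prop :=
  ∃ σ : Strategy V, ValidStrategy A σ ∧
    ∀ p, IsPlay A s p → ConsistentEve A σ p → ∀ i, Visits p (F i)

/-- The extended sequence of attractor sets `A_{π(i)}` for `1 ≤ i ≤ k`,
with the convention `A_{π(0)} = V` (and `univ` for out-of-range indices). -/
def extA (A : Arena V) {k : ℕ} (t : Fin k → V) (π : Equiv.Perm (Fin k))
    (i : ℕ) : Set V :=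
  if h : 1 ≤ i ∧ i ≤ k then Attr A ({t (π ⟨i - 1, by omega⟩)} : Set V)
  else Set.univ

/-- The extended sequence of target vertices `t_{π(i)}` for `1 ≤ i ≤ k`,
with the convention `t_{π(k+1)} = s` (and `s` for out-of-range indices). -/
def extT {k : ℕ} (t : Fin k → V) (π : Equiv.Perm (Fin k)) (s : V) (i : ℕ) : V :=
  if h : 1 ≤ i ∧ i ≤ k then t (π ⟨i - 1, by omega⟩) else s

/-!
If Eve wins, Adam cannot separate two singleton targets `a`, `b` (after reaching one of them he
would avoid the attractor of the other), so one lies in the attractor of the other; the attractors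
are therefore totally ordered by inclusion, and sorting them gives the chain, with `s` in the
smallest. For the `F0`-condition, let the level `ℓ` be the least `i` such that `t_{π(i+1)}` has
been visited (`t_{π(k+1)} = s`). If the condition failed, Adam could avoid
`Attr(A_{π(ℓ)} ∩ F0)` for the current level until `F0` is visited, since each change of level
happens at the vertex `t_{π(ℓ+1)}`, outside that set; so `F0` is first reached outside
`A_{π(ℓ)}`, and from then on Adam avoids `A_{π(ℓ)}`, so `t_{π(ℓ)}` is never visited.

Conversely, the conditions give a sequence of attractors for Eve to play one after another:
from `s` to `t_{π(k)}`, then to `t_{π(k-1)}`, ..., to `t_{π(i+1)}`, to `A_{π(i)} ∩ F0`, to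
`t_{π(i)}`, ..., to `t_{π(1)}`.
-/

open Classical

section Attractor

variable {A : Arena V} {S : Set V}

theorem attrN_mono (A : Arena V) (S : Set V) : Monotone (AttrN A S) :=
  monotone_nat_of_le_succ fun _ _ hx => Or.inl (Or.inl hx)

theorem subset_attr (A : Arena V) (S : Set V) : S ⊆ Attr A S :=
  fun _ hx => Set.mem_iUnion.2 ⟨0, hx⟩

theorem mem_attr_of_eve {u v : V} (hu : u ∈ A.VEve) (huv : A.E u v) (hv : v ∈ Attr A S) :
    u ∈ Attr A S := by
  obtain ⟨n, hn⟩ := Set.mem_iUnion.1 hv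
  exact Set.mem_iUnion.2 ⟨n + 1, Or.inl (Or.inr ⟨hu, v, huv, hn⟩)⟩

theorem mem_attr_of_adam {u : V} (hu : u ∉ A.VEve) (h : ∀ v, A.E u v → v ∈ Attr A S) :
    u ∈ Attr A S := by
  -- `u` has finitely many successors and the levels increase, so one level contains them all
  have hlevel : ∀ᶠ n in Filter.atTop, ∀ v, A.E u v → v ∈ AttrN A S n := by
    refine Filter.eventually_all.2 fun v => ?_
    by_cases huv : A.E u v
    · obtain ⟨n, hn⟩ := Set.mem_iUnion.1 (h v huv)
      exact Filter.eventually_atTop.2 ⟨n, fun m hm _ => attrN_mono A S hm hn⟩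
    · exact Filter.Eventually.of_forall fun _ h' => absurd h' huv
  obtain ⟨n, hn⟩ := hlevel.exists
  exact Set.mem_iUnion.2 ⟨n + 1, Or.inr ⟨hu, hn⟩⟩

theorem attr_subset_of_closed {X : Set V} (hS : S ⊆ X)
    (hEve : ∀ u ∈ A.VEve, ∀ v, A.E u v → v ∈ X → u ∈ X)
    (hAdam : ∀ u ∉ A.VEve, (∀ v, A.E u v → v ∈ X) → u ∈ X) : Attr A S ⊆ X := by
  refine Set.iUnion_subset fun n => ?_
  induction n with
  | zero => exact hS
  | succ n ih =>
    rintro u ((hu | ⟨hu, v, huv, hv⟩) | ⟨hu, hv⟩)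
    · exact ih hu
    · exact hEve u hu v huv (ih hv)
    · exact hAdam u hu fun v huv => ih (hv v huv)

theorem attr_subset_attr {T : Set V} (h : S ⊆ Attr A T) : Attr A S ⊆ Attr A T :=
  attr_subset_of_closed h (fun _ hu _ huv hv => mem_attr_of_eve hu huv hv)
    (fun _ hu hv => mem_attr_of_adam hu hv)

/-- Eve's attractor move: a successor of strictly smaller rank, if there is one. -/
noncomputable def attrMove (A : Arena V) (S : Set V) (v : V) : V :=
  if H : ∃ w, A.E v w ∧ ∃ n, w ∈ AttrN A S n ∧ v ∉ AttrN A S n then H.choose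
  else (A.succ_nonempty v).choose

theorem attrMove_edge (v : V) : A.E v (attrMove A S v) := by
  unfold attrMove
  split
  · next H => exact H.choose_spec.1
  · exact (A.succ_nonempty v).choose_spec

theorem attrMove_mem_attrN {v : V} {n : ℕ} (hv : v ∈ AttrN A S (n + 1)) (hvn : v ∉ AttrN A S n)
    (hEve : v ∈ A.VEve) : attrMove A S v ∈ AttrN A S n := by
  obtain ⟨w, hvw, hw⟩ : ∃ w, A.E v w ∧ w ∈ AttrN A S n := by
    rcases hv with (hv | ⟨-, w, hvw, hw⟩) | ⟨hAdam, -⟩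
    exacts [absurd hv hvn, ⟨w, hvw, hw⟩, absurd hEve hAdam]
  have H : ∃ w, A.E v w ∧ ∃ n, w ∈ AttrN A S n ∧ v ∉ AttrN A S n := ⟨w, hvw, n, hw, hvn⟩
  obtain ⟨-, m, hm, hvm⟩ := H.choose_spec
  have hmn : m ≤ n := by
    by_contra! hnm
    exact hvm (attrN_mono A S (Nat.succ_le_of_lt hnm) hv)
  rw [attrMove, dif_pos H]
  exact attrN_mono A S hmn hm

theorem exists_mem_of_follows_attrMove {n : ℕ} {p : ℕ → V} (hp : ∀ i, A.E (p i) (p (i + 1)))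
    (hc : ∀ i, p i ∈ A.VEve → p (i + 1) = attrMove A S (p i)) (h0 : p 0 ∈ AttrN A S n) :
    ∃ m, p m ∈ S := by
  induction n generalizing p with
  | zero => exact ⟨0, h0⟩
  | succ n ih =>
    by_cases hn : p 0 ∈ AttrN A S n
    · exact ih hp hc hn
    have h1 : p 1 ∈ AttrN A S n := by
      rcases id h0 with (h0' | ⟨hEve, -⟩) | ⟨-, hsucc⟩
      · exact absurd h0' hn
      · rw [hc 0 hEve]
        exact attrMove_mem_attrN h0 hn hEve
      · exact hsucc _ (hp 0)
    obtain ⟨m, hm⟩ := ih (p := fun i => p (i + 1)) (fun i => hp (i + 1)) (fun i => hc (i + 1)) h1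
    exact ⟨m + 1, hm⟩

end Attractor

section History

variable {α : Type*} (p : ℕ → α)

theorem hist_zero : hist p 0 = [] := rfl

theorem hist_succ (n : ℕ) : hist p (n + 1) = hist p n ++ [p n] := by
  rw [hist, List.ofFn_succ', List.concat_eq_append]
  rfl

theorem hist_succ_eq_cons (n : ℕ) : hist p (n + 1) = p 0 :: hist (fun j => p (j + 1)) n := by
  simp [hist, List.ofFn_succ]

theorem hist_add (m n : ℕ) : hist p (m + n) = hist p m ++ hist (fun j => p (m + j)) n := by
  induction n with
  | zero => simp [hist_zero]
  | succ n ih => rw [← add_assoc, hist_succ, ih, hist_succ, List.append_assoc]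

variable {p}

theorem mem_hist {x : α} {n : ℕ} : x ∈ hist p n ↔ ∃ l < n, p l = x := by
  simp [hist, List.mem_ofFn, Fin.exists_iff]

variable {P : α → Prop} {n₀ : ℕ}

theorem decide_not_of_mem_hist {n : ℕ} (h : ∀ l < n, ¬ P (p l)) :
    ∀ x ∈ hist p n, decide (¬ P x) = true := fun x hx => by
  obtain ⟨l, hl, rfl⟩ := mem_hist.1 hx
  simpa using h l hl

theorem hist_takeWhile_of_le (hmin : ∀ l < n₀, ¬ P (p l)) (hP : P (p n₀)) {n : ℕ} (hn : n₀ ≤ n) :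
    (hist p n).takeWhile (fun x => ¬ P x) = hist p n₀ := by
  obtain ⟨d, rfl⟩ := Nat.exists_eq_add_of_le hn
  rw [hist_add, List.takeWhile_append_of_pos (decide_not_of_mem_hist hmin)]
  cases d with
  | zero => simp [hist_zero]
  | succ d => simp [hist_succ_eq_cons, List.takeWhile_cons_of_neg, hP]

theorem hist_dropWhile_of_le (hmin : ∀ l < n₀, ¬ P (p l)) (hP : P (p n₀)) {n : ℕ} (hn : n₀ ≤ n) :
    (hist p n).dropWhile (fun x => ¬ P x) = hist (fun j => p (n₀ + j)) (n - n₀) := by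
  obtain ⟨d, rfl⟩ := Nat.exists_eq_add_of_le hn
  rw [hist_add, List.dropWhile_append_of_pos (decide_not_of_mem_hist hmin), Nat.add_sub_cancel_left]
  cases d with
  | zero => rfl
  | succ d => simp [hist_succ_eq_cons, List.dropWhile_cons_of_neg, hP]

theorem hist_dropWhile_of_forall {n : ℕ} (h : ∀ l < n, ¬ P (p l)) :
    (hist p n).dropWhile (fun x => ¬ P x) = [] :=
  List.dropWhile_eq_nil_iff.2 (decide_not_of_mem_hist h)

end History

section Composition

variable {A : Arena V}

theorem EveWins.mono {ι κ : Type*} {s : V} {F : ι → Set V} {G : κ → Set V}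
    (hw : EveWins A s F) (h : ∀ j, ∃ i, F i ⊆ G j) : EveWins A s G := by
  obtain ⟨σ, hσ, hwin⟩ := hw
  refine ⟨σ, hσ, fun p hp hc j => ?_⟩
  obtain ⟨i, hi⟩ := h j
  obtain ⟨m, hm⟩ := hwin p hp hc i
  exact ⟨m, hi hm⟩

theorem eveWins_of_isEmpty {ι : Type*} [IsEmpty ι] (s : V) (F : ι → Set V) : EveWins A s F :=
  ⟨fun _ v => (A.succ_nonempty v).choose, fun _ v => (A.succ_nonempty v).choose_spec,
    fun _ _ _ i => isEmptyElim i⟩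

/-- Play `attrMove` until `S` is first visited at some `w`, then `τ w` on the history since then. -/
noncomputable def seqStrategy (A : Arena V) (S : Set V) (τ : V → Strategy V) : Strategy V :=
  fun h v =>
    match (h ++ [v]).dropWhile (fun x => x ∉ S) with
    | [] => attrMove A S v
    | w :: _ => τ w (h.dropWhile (fun x => x ∉ S)) v

theorem seqStrategy_valid {S : Set V} {τ : V → Strategy V} (hτ : ∀ w, ValidStrategy A (τ w)) :
    ValidStrategy A (seqStrategy A S τ) := by
  intro h v
  unfold seqStrategy
  split
  · exact attrMove_edge v
  · exact hτ _ _ _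

theorem seqStrategy_hist_of_forall {S : Set V} (τ : V → Strategy V) {p : ℕ → V} {i : ℕ}
    (h : ∀ l < i + 1, p l ∉ S) : seqStrategy A S τ (hist p i) (p i) = attrMove A S (p i) := by
  rw [seqStrategy, ← hist_succ, hist_dropWhile_of_forall h]

theorem seqStrategy_hist_of_le {S : Set V} (τ : V → Strategy V) {p : ℕ → V} {n₀ i : ℕ}
    (hmin : ∀ l < n₀, p l ∉ S) (hS : p n₀ ∈ S) (hi : n₀ ≤ i) :
    seqStrategy A S τ (hist p i) (p i) = τ (p n₀) (hist (fun j => p (n₀ + j)) (i - n₀)) (p i) := by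
  rw [seqStrategy, ← hist_succ, hist_dropWhile_of_le hmin (by simpa using hS) (by omega),
    hist_dropWhile_of_le hmin (by simpa using hS) hi, show i + 1 - n₀ = i - n₀ + 1 by omega,
    hist_succ_eq_cons]
  simp

theorem eveWins_option_elim_of_mem_attr {ι : Type*} {s : V} {S : Set V} {F : ι → Set V}
    (hs : s ∈ Attr A S) (hw : ∀ w ∈ S, EveWins A w F) :
    EveWins A s (fun o : Option ι => o.elim S F) := by
  have hτ : ∀ w, ∃ τ : Strategy V, ValidStrategy A τ ∧
      (w ∈ S → ∀ q, IsPlay A w q → ConsistentEve A τ q → ∀ i, Visits q (F i)) := by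
    intro w
    by_cases hwS : w ∈ S
    · obtain ⟨τ, hτ, hwin⟩ := hw w hwS
      exact ⟨τ, hτ, fun _ => hwin⟩
    · exact ⟨fun _ v => attrMove A S v, fun _ v => attrMove_edge v, fun h => absurd h hwS⟩
  choose τ hτ hτwin using hτ
  refine ⟨seqStrategy A S τ, seqStrategy_valid hτ, fun p hp hc => ?_⟩
  have hreach : ∃ n, p n ∈ S := by
    by_contra! hS
    obtain ⟨n, hn⟩ := Set.mem_iUnion.1 (hp.1 ▸ hs)
    obtain ⟨m, hm⟩ := exists_mem_of_follows_attrMove hp.2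
      (fun i hi => (hc i hi).trans (seqStrategy_hist_of_forall τ fun l _ => hS l)) hn
    exact hS m hm
  set n₀ := Nat.find hreach
  have hmin : ∀ l < n₀, p l ∉ S := fun l => Nat.find_min hreach
  have hsuffix : ConsistentEve A (τ (p n₀)) (fun j => p (n₀ + j)) := fun j hj => by
    simpa [← add_assoc] using (hc (n₀ + j) hj).trans
      (seqStrategy_hist_of_le τ hmin (Nat.find_spec hreach) (Nat.le_add_right n₀ j))
  rintro (_ | i)
  · exact ⟨n₀, Nat.find_spec hreach⟩
  · obtain ⟨m, hm⟩ := hτwin (p n₀) (Nat.find_spec hreach) _ ⟨rfl, fun j => hp.2 (n₀ + j)⟩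
      hsuffix i
    exact ⟨n₀ + m, hm⟩

end Composition

section Outcome

variable {A : Arena V}

noncomputable def outcomeState (A : Arena V) (σ τ : Strategy V) (s : V) : ℕ → V × List V
  | 0 => (s, [])
  | n + 1 =>
    let x := outcomeState A σ τ s n
    ((if x.1 ∈ A.VEve then σ else τ) x.2 x.1, x.2 ++ [x.1])

theorem outcomeState_snd (σ τ : Strategy V) (s : V) (n : ℕ) :
    (outcomeState A σ τ s n).2 = hist (fun i => (outcomeState A σ τ s i).1) n := by
  induction n with
  | zero => rfl
  | succ n ih => rw [hist_succ, ← ih]; rfl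

theorem exists_play_consistent {σ τ : Strategy V} (hσ : ValidStrategy A σ)
    (hτ : ValidStrategy A τ) (s : V) :
    ∃ p, IsPlay A s p ∧ ConsistentEve A σ p ∧ ConsistentAdam A τ p := by
  set p := fun i => (outcomeState A σ τ s i).1
  have hstep : ∀ i, p (i + 1) = (if p i ∈ A.VEve then σ else τ) (hist p i) (p i) := fun i => by
    rw [← outcomeState_snd]; rfl
  refine ⟨p, ⟨rfl, fun i => ?_⟩, fun i hi => by rw [hstep, if_pos hi],
    fun i hi => by rw [hstep, if_neg hi]⟩
  rw [hstep]
  split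
  exacts [hσ _ _, hτ _ _]

noncomputable def escapeMove (A : Arena V) (X : Set V) (v : V) : V :=
  if H : ∃ w, A.E v w ∧ w ∉ Attr A X then H.choose else (A.succ_nonempty v).choose

theorem escapeMove_edge (X : Set V) (v : V) : A.E v (escapeMove A X v) := by
  unfold escapeMove
  split
  · next H => exact H.choose_spec.1
  · exact (A.succ_nonempty v).choose_spec

theorem escapeMove_not_mem_attr {X : Set V} {v : V} (hv : v ∉ Attr A X) (hAdam : v ∉ A.VEve) :
    escapeMove A X v ∉ Attr A X := by
  have H : ∃ w, A.E v w ∧ w ∉ Attr A X := by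
    by_contra! h
    exact hv (mem_attr_of_adam hAdam h)
  rw [escapeMove, dif_pos H]
  exact H.choose_spec.2

theorem exists_play_escaping {σ : Strategy V} (hσ : ValidStrategy A σ) (s : V)
    (X : List V → Set V) :
    ∃ p, IsPlay A s p ∧ ConsistentEve A σ p ∧
      ∀ m, p m ∉ Attr A (X (hist p (m + 1))) → p (m + 1) ∉ Attr A (X (hist p (m + 1))) := by
  obtain ⟨p, hp, hpσ, hpτ⟩ := exists_play_consistent (τ := fun h v => escapeMove A (X (h ++ [v])) v)
    hσ (fun _ _ => escapeMove_edge _ _) s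
  refine ⟨p, hp, hpσ, fun m hm => ?_⟩
  by_cases hEve : p m ∈ A.VEve
  · exact fun h => hm (mem_attr_of_eve hEve (hp.2 m) h)
  · rw [hpτ m hEve]
    dsimp only
    rw [← hist_succ]
    exact escapeMove_not_mem_attr hm hEve

theorem not_mem_attr_of_escaping {p : ℕ → V} {X : ℕ → Set V}
    (hstep : ∀ m, p m ∉ Attr A (X m) → p (m + 1) ∉ Attr A (X m)) {Y : Set V} {m n : ℕ}
    (hmn : m ≤ n) (hX : ∀ j, m ≤ j → j < n → X j = Y) (hm : p m ∉ Attr A Y) :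
    p n ∉ Attr A Y := by
  induction n, hmn using Nat.le_induction with
  | base => exact hm
  | succ n hmn ih =>
    have h := hstep n
    rw [hX n hmn n.lt_succ_self] at h
    exact h (ih fun j hj hjn => hX j hj (by omega))

end Outcome

section Extended

theorem extT_top {α : Type*} {k : ℕ} (t : Fin k → α) (π : Equiv.Perm (Fin k)) (s : α) :
    extT t π s (k + 1) = s :=
  dif_neg (by omega)

theorem extT_coe_add_one {α : Type*} {k : ℕ} (t : Fin k → α) (π : Equiv.Perm (Fin k)) (s : α)
    (i : Fin k) : extT t π s (i + 1) = t (π i) := by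
  rw [extT, dif_pos ⟨by omega, by omega⟩]
  rfl

variable (A : Arena V) {k : ℕ} (t : Fin k → V) (π : Equiv.Perm (Fin k)) (s : V)

theorem extA_zero : extA A t π 0 = Set.univ := dif_neg (by omega)

theorem extA_eq_attr {i : ℕ} (h1 : 1 ≤ i) (h2 : i ≤ k) :
    extA A t π i = Attr A {extT t π s i} := by
  rw [extA, extT, dif_pos ⟨h1, h2⟩, dif_pos ⟨h1, h2⟩]

theorem extT_mem_extA {i : ℕ} (h1 : 1 ≤ i) (h2 : i ≤ k) : extT t π s i ∈ extA A t π i := by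
  rw [extA_eq_attr A t π s h1 h2]
  exact subset_attr A _ rfl

variable {A t π}

theorem extA_succ_subset (hπ : Antitone fun i => Attr A {t (π i)}) {i : ℕ} (h1 : 1 ≤ i)
    (h2 : i + 1 ≤ k) : extA A t π (i + 1) ⊆ extA A t π i := by
  rw [extA, dif_pos ⟨by omega, h2⟩, extA, dif_pos ⟨h1, by omega⟩]
  exact hπ (Fin.mk_le_mk.2 (by omega))

end Extended

section Necessity

variable {A : Arena V} {s : V}

theorem EveWins.mem_attr {ι : Type*} {F : ι → Set V} (hw : EveWins A s F) (i : ι) :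
    s ∈ Attr A (F i) := by
  by_contra hs
  obtain ⟨σ, hσ, hwin⟩ := hw
  obtain ⟨p, hp, hpσ, hstep⟩ := exists_play_escaping hσ s fun _ => F i
  obtain ⟨n, hn⟩ := hwin p hp hpσ i
  exact not_mem_attr_of_escaping hstep (Nat.zero_le n) (fun _ _ _ => rfl) (hp.1 ▸ hs)
    (subset_attr A _ hn)

theorem EveWins.mem_attr_singleton_or {ι : Type*} {F : ι → Set V} (hw : EveWins A s F)
    {i j : ι} {a b : V} (ha : F i = {a}) (hb : F j = {b}) :
    a ∈ Attr A {b} ∨ b ∈ Attr A {a} := by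
  by_contra! h
  obtain ⟨hab, hba⟩ := h
  obtain ⟨σ, hσ, hwin⟩ := hw
  obtain ⟨p, hp, hpσ, hstep⟩ := exists_play_escaping hσ s fun L => if a ∈ L then {b} else {a}
  have hva : ∃ n, p n = a := by simpa [Visits, ha] using hwin p hp hpσ i
  obtain ⟨nb, hnb⟩ : ∃ n, p n = b := by simpa [Visits, hb] using hwin p hp hpσ j
  set na := Nat.find hva
  have hna : p na = a := Nat.find_spec hva
  rcases le_or_gt na nb with hle | hlt
  · refine not_mem_attr_of_escaping hstep hle
      (fun l hl _ => if_pos (mem_hist.2 ⟨na, by omega, hna⟩)) (hna ▸ hab) ?_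
    exact hnb ▸ subset_attr A _ rfl
  · refine not_mem_attr_of_escaping hstep hlt.le (fun l _ hl => if_neg fun hmem => ?_)
      (hnb ▸ hba) (hna ▸ subset_attr A _ rfl)
    obtain ⟨l', hl', hpl'⟩ := mem_hist.1 hmem
    exact Nat.find_min hva (by omega : l' < na) hpl'

theorem exists_perm_antitone_of_comparable {α : Type*} [Finite α] {k : ℕ} (X : Fin k → Set α)
    (h : ∀ a b, X a ⊆ X b ∨ X b ⊆ X a) : ∃ π : Equiv.Perm (Fin k), Antitone (X ∘ π) := by
  -- for comparable sets, inclusion is decided by cardinality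
  let κ : Fin k → ℕᵒᵈ := fun a => OrderDual.toDual (X a).ncard
  refine ⟨Tuple.sort κ, fun i j hij => ?_⟩
  have hcard : (X (Tuple.sort κ j)).ncard ≤ (X (Tuple.sort κ i)).ncard :=
    Tuple.monotone_sort κ hij
  rcases h (Tuple.sort κ j) (Tuple.sort κ i) with hsub | hsub
  · exact hsub
  · exact (Set.eq_of_subset_of_ncard_le hsub hcard).ge

end Necessity

section VisitLevel

variable {α : Type*} (u : ℕ → α) (k : ℕ)

noncomputable def visitLevel (L : List α) : ℕ :=
  Nat.find (⟨k, Or.inr rfl⟩ : ∃ j, u (j + 1) ∈ L ∨ j = k)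

variable {u k}

theorem visitLevel_le (L : List α) : visitLevel u k L ≤ k :=
  Nat.find_min' _ (Or.inr rfl)

theorem visitLevel_le_of_mem {L : List α} {j : ℕ} (h : u (j + 1) ∈ L) : visitLevel u k L ≤ j :=
  Nat.find_min' _ (Or.inl h)

theorem visitLevel_spec (L : List α) : u (visitLevel u k L + 1) ∈ L ∨ visitLevel u k L = k :=
  Nat.find_spec (⟨k, Or.inr rfl⟩ : ∃ j, u (j + 1) ∈ L ∨ j = k)

theorem visitLevel_nil : visitLevel u k [] = k :=
  (visitLevel_spec (u := u) []).resolve_left List.not_mem_nil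

theorem visitLevel_append_singleton (L : List α) (x : α) :
    visitLevel u k (L ++ [x]) = visitLevel u k L ∨ u (visitLevel u k (L ++ [x]) + 1) = x := by
  by_cases hx : u (visitLevel u k (L ++ [x]) + 1) = x
  · exact Or.inr hx
  refine Or.inl (le_antisymm (Nat.find_mono fun j hj => hj.imp_left fun h => by simp [h]) ?_)
  rcases visitLevel_spec (u := u) (k := k) (L ++ [x]) with h | h
  · exact visitLevel_le_of_mem (by simpa [hx] using h)
  · rw [h]
    exact visitLevel_le L

end VisitLevel

section LevelArgument

variable {A : Arena V}

theorem not_mem_attr_visitLevel {u : ℕ → V} {k : ℕ} {B : ℕ → Set V}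
    (hu : ∀ j ≤ k, u (j + 1) ∉ Attr A (B j)) {p : ℕ → V} (hp0 : p 0 = u (k + 1)) {n : ℕ}
    (hstep : ∀ m < n, p m ∉ Attr A (B (visitLevel u k (hist p (m + 1)))) →
      p (m + 1) ∉ Attr A (B (visitLevel u k (hist p (m + 1))))) :
    ∀ m ≤ n, p m ∉ Attr A (B (visitLevel u k (hist p m))) := by
  intro m
  induction m with
  | zero =>
    intro _
    rw [hist_zero, visitLevel_nil, hp0]
    exact hu k le_rfl
  | succ m ih =>
    intro hm
    refine hstep m hm ?_
    rw [hist_succ]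
    rcases visitLevel_append_singleton (u := u) (k := k) (hist p m) (p m) with h | h
    · rw [h]
      exact ih (by omega)
    · have hnext := hu _ (visitLevel_le (u := u) (hist p m ++ [p m]))
      rwa [h] at hnext

variable (A) {k : ℕ} (t : Fin k → V) (π : Equiv.Perm (Fin k)) (s : V) (F0 : Set V)

/-- Adam's choice of set to avoid against `F0` and the targets ordered by `π`: before `F0` is
visited, `A_{π(ℓ)} ∩ F0` for the current level `ℓ`; afterwards `t_{π(ℓ)}`, with `ℓ` the level
reached just before `F0`. -/
noncomputable def avoidF0 (L : List V) : Set V :=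
  if ∀ x ∈ L, x ∉ F0 then extA A t π (visitLevel (extT t π s) k L) ∩ F0
  else {extT t π s (visitLevel (extT t π s) k (L.takeWhile fun x => x ∉ F0))}

variable {A t π s F0}

theorem avoidF0_hist_of_lt {p : ℕ → V} {m₀ m : ℕ} (hmin : ∀ l < m₀, p l ∉ F0) (hm : m < m₀) :
    avoidF0 A t π s F0 (hist p (m + 1)) =
      extA A t π (visitLevel (extT t π s) k (hist p (m + 1))) ∩ F0 :=
  if_pos fun x hx => by
    obtain ⟨l, hl, rfl⟩ := mem_hist.1 hx
    exact hmin l (by omega)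

theorem avoidF0_hist_of_le {p : ℕ → V} {m₀ m : ℕ} (hmin : ∀ l < m₀, p l ∉ F0) (hF0 : p m₀ ∈ F0)
    (hm : m₀ ≤ m) :
    avoidF0 A t π s F0 (hist p (m + 1)) = {extT t π s (visitLevel (extT t π s) k (hist p m₀))} := by
  rw [avoidF0, if_neg fun h => h _ (mem_hist.2 ⟨m₀, by omega, rfl⟩) hF0,
    hist_takeWhile_of_le hmin hF0 (by omega)]

theorem EveWins.exists_extT_mem_attr_inter
    (hw : EveWins A s (fun x : Option (Fin k) => x.elim F0 fun i => ({t i} : Set V))) :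
    ∃ i ≤ k, extT t π s (i + 1) ∈ Attr A (extA A t π i ∩ F0) := by
  by_contra! hcon
  obtain ⟨σ, hσ, hwin⟩ := hw
  obtain ⟨p, hp, hpσ, hstep⟩ := exists_play_escaping hσ s (avoidF0 A t π s F0)
  have hF0 : ∃ n, p n ∈ F0 := hwin p hp hpσ none
  set m₀ := Nat.find hF0
  have hmin : ∀ l < m₀, p l ∉ F0 := fun l => Nat.find_min hF0
  set ℓ := visitLevel (extT t π s) k (hist p m₀)
  have hℓ : p m₀ ∉ extA A t π ℓ := fun h => by
    refine not_mem_attr_visitLevel hcon (hp.1.trans (extT_top t π s).symm)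
      (fun m hm => ?_) m₀ le_rfl (subset_attr A _ ⟨h, Nat.find_spec hF0⟩)
    simpa only [avoidF0_hist_of_lt hmin hm] using hstep m
  have hℓpos : 1 ≤ ℓ := Nat.pos_of_ne_zero fun h0 => hℓ (by rw [h0, extA_zero]; trivial)
  have hℓk : ℓ ≤ k := visitLevel_le _
  rw [extA_eq_attr A t π s hℓpos hℓk] at hℓ
  have hafter : ∀ n ≥ m₀, p n ∉ Attr A {extT t π s ℓ} := fun n hn =>
    not_mem_attr_of_escaping hstep hn
      (fun j hj _ => avoidF0_hist_of_le hmin (Nat.find_spec hF0) hj) hℓ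
  -- `t_{π(ℓ)}` must be visited, but neither before `m₀` (minimality of `ℓ`) nor after
  obtain ⟨n, hn⟩ : ∃ n, p n = extT t π s ℓ := by
    obtain ⟨n, hn⟩ := hwin p hp hpσ (some (π ⟨ℓ - 1, by omega⟩))
    exact ⟨n, by rw [extT, dif_pos ⟨hℓpos, hℓk⟩]; exact hn⟩
  rcases lt_or_ge n m₀ with hlt | hle
  · have := visitLevel_le_of_mem (u := extT t π s) (k := k) (j := ℓ - 1)
      (mem_hist (p := p).2 ⟨n, hlt, by rw [hn, Nat.sub_add_cancel hℓpos]⟩)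
    omega
  · exact hafter n hle (hn ▸ subset_attr A _ rfl)

end LevelArgument

section Sufficiency

variable {A : Arena V} {k : ℕ} {t : Fin k → V} {π : Equiv.Perm (Fin k)} {s : V}

theorem extT_succ_mem_extA
    (hchain : ∀ i : ℕ, 1 ≤ i → i + 1 ≤ k → extA A t π (i + 1) ⊆ extA A t π i)
    (hs : s ∈ extA A t π k) {j : ℕ} (hj : j ≤ k) : extT t π s (j + 1) ∈ extA A t π j := by
  rcases Nat.eq_zero_or_pos j with rfl | hj0
  · rw [extA_zero]
    trivial
  rcases hj.lt_or_eq with hjk | rfl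
  · exact hchain j hj0 hjk (extT_mem_extA A t π s (by omega) hjk)
  · rwa [extT_top]

theorem eveWins_descending
    (hchain : ∀ i : ℕ, 1 ≤ i → i + 1 ≤ k → extA A t π (i + 1) ⊆ extA A t π i)
    (hs : s ∈ extA A t π k) {j : ℕ} (hj : j ≤ k) {w : V} (hw : w ∈ extA A t π j) :
    EveWins A w (fun i : Fin j => ({extT t π s (i + 1)} : Set V)) := by
  induction j generalizing w with
  | zero => exact eveWins_of_isEmpty w _
  | succ j ih =>
    rw [extA_eq_attr A t π s (by omega) hj] at hw
    have hnext : EveWins A w (fun o : Option (Fin j) =>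
        o.elim {extT t π s (j + 1)} fun i => {extT t π s (i + 1)}) :=
      eveWins_option_elim_of_mem_attr hw fun v hv => ih (by omega) <| by
        rw [Set.mem_singleton_iff.1 hv]
        exact extT_succ_mem_extA hchain hs (by omega)
    exact hnext.mono (Fin.lastCases ⟨none, by simp⟩ fun i => ⟨some i, by simp⟩)

theorem eveWins_of_mem_attr_inter {F0 : Set V}
    (hchain : ∀ i : ℕ, 1 ≤ i → i + 1 ≤ k → extA A t π (i + 1) ⊆ extA A t π i)
    (hs : s ∈ extA A t π k) {i₀ : ℕ}
    (hi₀ : extT t π s (i₀ + 1) ∈ Attr A (extA A t π i₀ ∩ F0)) {j : ℕ} (hij : i₀ ≤ j) (hj : j ≤ k) :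
    EveWins A (extT t π s (j + 1))
      (fun o : Option (Fin j) => o.elim F0 fun i => {extT t π s (i + 1)}) := by
  induction j, hij using Nat.le_induction with
  | base =>
    refine (eveWins_option_elim_of_mem_attr hi₀ fun w hw =>
      eveWins_descending hchain hs hj hw.1).mono ?_
    rintro (_ | i)
    · exact ⟨none, Set.inter_subset_right⟩
    · exact ⟨some i, subset_rfl⟩
  | succ j hij ih =>
    have hreach : extT t π s (j + 1 + 1) ∈ Attr A {extT t π s (j + 1)} := by
      rw [← extA_eq_attr A t π s (by omega) hj]
      exact extT_succ_mem_extA hchain hs hj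
    have hnext : EveWins A (extT t π s (j + 1 + 1)) (fun o : Option (Option (Fin j)) =>
        o.elim {extT t π s (j + 1)} fun o => o.elim F0 fun i => {extT t π s (i + 1)}) :=
      eveWins_option_elim_of_mem_attr hreach fun v hv => by
        rw [Set.mem_singleton_iff.1 hv]
        exact ih (by omega)
    refine hnext.mono ?_
    rintro (_ | i)
    · exact ⟨some none, subset_rfl⟩
    · exact Fin.lastCases ⟨none, by simp⟩ (fun i => ⟨some (some i), by simp⟩) i

end Sufficiency

/-- targets are a set `F0` together with singletons
`{t 1}, ..., {t k}`. Eve wins iff for some permutation `π` the attractors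
`A_{π(1)} ⊇ ... ⊇ A_{π(k)}` form a decreasing chain, `s ∈ A_{π(k)}`, and
some `t_{π(i+1)}` lies in `Attr(A_{π(i)} ∩ F0)` (with `A_{π(0)} = V`,
`t_{π(k+1)} = s`). -/
theorem genReach_one_big_target_iff (A : Arena V) (s : V) (F0 : Set V)
    (k : ℕ) (t : Fin k → V) :
    EveWins A s (fun x : Option (Fin k) =>
        x.elim F0 (fun i => ({t i} : Set V))) ↔
      ∃ π : Equiv.Perm (Fin k),
        (∀ i : ℕ, 1 ≤ i → i + 1 ≤ k → extA A t π (i + 1) ⊆ extA A t π i) ∧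
        s ∈ extA A t π k ∧
        ∃ i : ℕ, i ≤ k ∧ extT t π s (i + 1) ∈ Attr A (extA A t π i ∩ F0) := by
  constructor
  · intro hw
    have hcomparable (a b : Fin k) : Attr A {t a} ⊆ Attr A {t b} ∨ Attr A {t b} ⊆ Attr A {t a} :=
      (hw.mem_attr_singleton_or (i := some a) (j := some b) rfl rfl).imp
        (fun h => attr_subset_attr (Set.singleton_subset_iff.2 h))
        (fun h => attr_subset_attr (Set.singleton_subset_iff.2 h))
    obtain ⟨π, hπ⟩ := exists_perm_antitone_of_comparable _ hcomparable
    refine ⟨π, fun i h1 h2 => extA_succ_subset hπ h1 h2, ?_, hw.exists_extT_mem_attr_inter⟩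
    rcases Nat.eq_zero_or_pos k with rfl | hk
    · rw [extA_zero]
      trivial
    · rw [extA, dif_pos ⟨hk, le_rfl⟩]
      exact hw.mem_attr (some _)
  · rintro ⟨π, hchain, hs, i₀, hi₀k, hi₀⟩
    have hwin := eveWins_of_mem_attr_inter hchain hs hi₀ hi₀k le_rfl
    rw [extT_top] at hwin
    refine hwin.mono ?_
    rintro (_ | a)
    · exact ⟨none, subset_rfl⟩
    · exact ⟨some (π.symm a), by simp [extT_coe_add_one]⟩
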